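/- arXiv:1712.07196 — 4 statements merged into one kernel-verified Lean document; each statement's English description precedes it below -/
import Mathlib

section
/- If M : X^n → Y is ε-MI stable and M' : Y × X^n → Z is such that M'(y, ·) : X^n → Z is ε'-MI stable for every y ∈ Y, then the composition s ↦ M'(M(s), s) is (ε+ε')-MI stable. -/
open scoped BigOperators
open Finset

section LogSum

private lemma logsum_aux {ι : Type*} [Fintype ι] (a b : ι → ℝ) (ha : ∀ i, 0 ≤ a i)
    (hb : ∀ i, 0 ≤ b i) (hab : ∀ i, a i ≠ 0 → 0 < b i) :
    (∑ i, a i) * Real.log ((∑ i, a i) / (∑ i, b i)) ≤ ∑ i, a i * Real.log (a i / b i) := by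
  set A := ∑ i, a i with hA
  set B := ∑ i, b i with hB
  by_cases h0 : A = 0
  · have hz : ∀ i ∈ (univ : Finset ι), a i = 0 := fun i _ =>
      (Finset.sum_eq_zero_iff_of_nonneg (fun j _ => ha j)).1 h0 i (mem_univ i)
    rw [h0]
    simp only [zero_mul]
    apply Finset.sum_nonneg
    intro i _
    rw [hz i (mem_univ i)]
    simp
  · have hApos : 0 < A := lt_of_le_of_ne (Finset.sum_nonneg fun i _ => ha i) (Ne.symm h0)
    obtain ⟨i0, -, hi0⟩ : ∃ i ∈ (univ : Finset ι), a i ≠ 0 := by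
      by_contra h
      push_neg at h
      exact h0 (Finset.sum_eq_zero fun i hi => h i hi)
    have hBpos : 0 < B :=
      lt_of_lt_of_le (hab i0 hi0) (Finset.single_le_sum (fun i _ => hb i) (mem_univ i0))
    have key : ∀ i, a i - A / B * b i ≤ a i * Real.log (a i / b i) - a i * Real.log (A / B) := by
      intro i
      by_cases hai : a i = 0
      · rw [hai]
        simp only [zero_mul, sub_zero, zero_sub, zero_mul, sub_self]
        have : 0 ≤ A / B * b i := mul_nonneg (le_of_lt (div_pos hApos hBpos)) (hb i)
        linarith
      · have hia : 0 < a i := lt_of_le_of_ne (ha i) (Ne.symm hai)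
        have hib : 0 < b i := hab i hai
        have harg : 0 < A / B * (b i / a i) :=
          mul_pos (div_pos hApos hBpos) (div_pos hib hia)
        have h1 := Real.log_le_sub_one_of_pos harg
        have h2 : Real.log (A / B * (b i / a i)) = Real.log (A / B) - Real.log (a i / b i) := by
          rw [Real.log_mul (ne_of_gt (div_pos hApos hBpos)) (ne_of_gt (div_pos hib hia)),
            Real.log_div (ne_of_gt hib) (ne_of_gt hia),
            Real.log_div (ne_of_gt hia) (ne_of_gt hib)]
          ring
        have h3 : a i * (A / B * (b i / a i)) = A / B * b i := by
          field_simp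
        nlinarith [hia]
    have hsum := Finset.sum_le_sum (fun i (_ : i ∈ univ) => key i)
    have hl : ∑ i, (a i - A / B * b i) = 0 := by
      rw [Finset.sum_sub_distrib, ← Finset.mul_sum, ← hA, ← hB, div_mul_cancel₀]
      · ring
      · exact ne_of_gt hBpos
    have hr : ∑ i, (a i * Real.log (a i / b i) - a i * Real.log (A / B)) =
        (∑ i, a i * Real.log (a i / b i)) - A * Real.log (A / B) := by
      rw [Finset.sum_sub_distrib, ← Finset.sum_mul]
    rw [hl, hr] at hsum
    linarith

end LogSum

noncomputable def condMI {X Y : Type*} [Fintype X] [Fintype Y] {N : ℕ}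
    (P : PMF (Fin N → X)) (M : (Fin N → X) → PMF Y) (i : Fin N) : ℝ :=
  ∑ s : Fin N → X, ∑ y : Y,
    ((P s).toReal * (M s y).toReal) *
      Real.log
        ((((P s).toReal * (M s y).toReal) *
            ∑ x : X, (P (Function.update s i x)).toReal) /
          ((P s).toReal *
            ∑ x : X, (P (Function.update s i x)).toReal * (M (Function.update s i x) y).toReal))

section Aux

variable {X Y Z : Type*} [Fintype X] [Fintype Y] [Fintype Z] {n : ℕ}

private lemma pmf_sum_toReal {α : Type*} [Fintype α] (p : PMF α) :
    ∑ a : α, (p a).toReal = 1 := by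
  rw [← ENNReal.toReal_sum (fun a _ => PMF.apply_ne_top p a), ← tsum_fintype (L := .unconditional _), PMF.tsum_coe,
    ENNReal.toReal_one]

/-- `A(s) = Σ_x P(s^{i←x})`. -/
noncomputable def AAx (P : PMF (Fin n → X)) (i : Fin n) (s : Fin n → X) : ℝ :=
  ∑ x : X, (P (Function.update s i x)).toReal

/-- `C(s,y) = Σ_x P(s^{i←x}) M(s^{i←x})(y)`. -/
noncomputable def CCx (P : PMF (Fin n → X)) (M : (Fin n → X) → PMF Y) (i : Fin n)
    (s : Fin n → X) (y : Y) : ℝ :=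
  ∑ x : X, (P (Function.update s i x)).toReal * (M (Function.update s i x) y).toReal

/-- `D(s,y,z) = Σ_x P(s^{i←x}) M(s^{i←x})(y) M'(y, s^{i←x})(z)`. -/
noncomputable def DDx (P : PMF (Fin n → X)) (M : (Fin n → X) → PMF Y)
    (M' : Y → (Fin n → X) → PMF Z) (i : Fin n) (s : Fin n → X) (y : Y) (z : Z) : ℝ :=
  ∑ x : X, (P (Function.update s i x)).toReal * (M (Function.update s i x) y).toReal *
    (M' y (Function.update s i x) z).toReal

private lemma AAx_def (P : PMF (Fin n → X)) (i : Fin n) (s : Fin n → X) :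
    AAx P i s = ∑ x : X, (P (Function.update s i x)).toReal := rfl

private lemma condMI_eq (P : PMF (Fin n → X)) (M : (Fin n → X) → PMF Y) (i : Fin n) :
    condMI P M i = ∑ s : Fin n → X, ∑ y : Y,
      ((P s).toReal * (M s y).toReal) *
        Real.log ((((P s).toReal * (M s y).toReal) * AAx P i s) /
          ((P s).toReal * CCx P M i s y)) := rfl

private lemma AAx_nonneg (P : PMF (Fin n → X)) (i : Fin n) (s : Fin n → X) :
    0 ≤ AAx P i s :=
  Finset.sum_nonneg fun _ _ => ENNReal.toReal_nonneg

private lemma CCx_nonneg (P : PMF (Fin n → X)) (M : (Fin n → X) → PMF Y) (i : Fin n)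
    (s : Fin n → X) (y : Y) : 0 ≤ CCx P M i s y :=
  Finset.sum_nonneg fun _ _ => mul_nonneg ENNReal.toReal_nonneg ENNReal.toReal_nonneg

private lemma DDx_nonneg (P : PMF (Fin n → X)) (M : (Fin n → X) → PMF Y)
    (M' : Y → (Fin n → X) → PMF Z) (i : Fin n) (s : Fin n → X) (y : Y) (z : Z) :
    0 ≤ DDx P M M' i s y z :=
  Finset.sum_nonneg fun _ _ =>
    mul_nonneg (mul_nonneg ENNReal.toReal_nonneg ENNReal.toReal_nonneg) ENNReal.toReal_nonneg

private lemma le_AAx (P : PMF (Fin n → X)) (i : Fin n) (s : Fin n → X) :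
    (P s).toReal ≤ AAx P i s := by
  have h := Finset.single_le_sum (f := fun x : X => (P (Function.update s i x)).toReal)
    (fun x _ => ENNReal.toReal_nonneg) (mem_univ (s i))
  simpa [Function.update_eq_self, AAx] using h

private lemma le_CCx (P : PMF (Fin n → X)) (M : (Fin n → X) → PMF Y) (i : Fin n)
    (s : Fin n → X) (y : Y) : (P s).toReal * (M s y).toReal ≤ CCx P M i s y := by
  have h := Finset.single_le_sum
    (f := fun x : X => (P (Function.update s i x)).toReal * (M (Function.update s i x) y).toReal)
    (fun x _ => mul_nonneg ENNReal.toReal_nonneg ENNReal.toReal_nonneg) (mem_univ (s i))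
  simpa [Function.update_eq_self, CCx] using h

private lemma le_DDx (P : PMF (Fin n → X)) (M : (Fin n → X) → PMF Y)
    (M' : Y → (Fin n → X) → PMF Z) (i : Fin n) (s : Fin n → X) (y : Y) (z : Z) :
    (P s).toReal * (M s y).toReal * (M' y s z).toReal ≤ DDx P M M' i s y z := by
  have h := Finset.single_le_sum
    (f := fun x : X => (P (Function.update s i x)).toReal * (M (Function.update s i x) y).toReal *
      (M' y (Function.update s i x) z).toReal)
    (fun x _ => mul_nonneg (mul_nonneg ENNReal.toReal_nonneg ENNReal.toReal_nonneg)
      ENNReal.toReal_nonneg) (mem_univ (s i))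
  simpa [Function.update_eq_self, DDx] using h

/-- The second summand in the chain-rule decomposition. -/
noncomputable def T2x (P : PMF (Fin n → X)) (M : (Fin n → X) → PMF Y)
    (M' : Y → (Fin n → X) → PMF Z) (i : Fin n) (y : Y) : ℝ :=
  ∑ s : Fin n → X, ∑ z : Z,
    ((P s).toReal * (M s y).toReal * (M' y s z).toReal) *
      Real.log ((M' y s z).toReal * CCx P M i s y / DDx P M M' i s y z)

private lemma sum_comm3 {A B C : Type*} [Fintype A] [Fintype B] [Fintype C] (f : A → B → C → ℝ) :
    ∑ a : A, ∑ b : B, ∑ c : C, f a b c = ∑ c : C, ∑ a : A, ∑ b : B, f a b c :=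
  (Finset.sum_congr rfl fun a _ => Finset.sum_comm).trans Finset.sum_comm

private lemma key1 (P : PMF (Fin n → X)) (M : (Fin n → X) → PMF Y)
    (M' : Y → (Fin n → X) → PMF Z) (i : Fin n) :
    condMI P (fun s => (M s).bind fun y => M' y s) i ≤
      ∑ s : Fin n → X, ∑ z : Z, ∑ y : Y,
        ((P s).toReal * (M s y).toReal * (M' y s z).toReal) *
          Real.log ((P s).toReal * (M s y).toReal * (M' y s z).toReal * AAx P i s /
            ((P s).toReal * DDx P M M' i s y z)) := by
  have hbind : ∀ (s : Fin n → X) (z : Z),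
      (((M s).bind fun y => M' y s) z).toReal = ∑ y : Y, (M s y).toReal * (M' y s z).toReal := by
    intro s z
    rw [PMF.bind_apply, tsum_fintype, ENNReal.toReal_sum]
    · exact Finset.sum_congr rfl fun y _ => ENNReal.toReal_mul
    · intro y _; exact ENNReal.mul_ne_top (PMF.apply_ne_top _ _) (PMF.apply_ne_top _ _)
  simp only [condMI, hbind, ← AAx_def]
  refine Finset.sum_le_sum fun s _ => Finset.sum_le_sum fun z _ => ?_
  have h := logsum_aux
    (fun y : Y => (P s).toReal * (M s y).toReal * (M' y s z).toReal)
    (fun y : Y => (P s).toReal * DDx P M M' i s y z / AAx P i s)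
    (fun y => mul_nonneg (mul_nonneg ENNReal.toReal_nonneg ENNReal.toReal_nonneg)
      ENNReal.toReal_nonneg)
    (fun y => div_nonneg (mul_nonneg ENNReal.toReal_nonneg (DDx_nonneg P M M' i s y z))
      (AAx_nonneg P i s))
    (by
      intro y hy
      have hp : 0 < (P s).toReal := by
        rcases mul_ne_zero_iff.1 hy with ⟨h1, -⟩
        rcases mul_ne_zero_iff.1 h1 with ⟨hp, -⟩
        exact lt_of_le_of_ne ENNReal.toReal_nonneg (Ne.symm hp)
      have hD : 0 < DDx P M M' i s y z :=
        lt_of_lt_of_le (lt_of_le_of_ne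
          (mul_nonneg (mul_nonneg ENNReal.toReal_nonneg ENNReal.toReal_nonneg)
            ENNReal.toReal_nonneg) (Ne.symm hy)) (le_DDx P M M' i s y z)
      have hA : 0 < AAx P i s := lt_of_lt_of_le hp (le_AAx P i s)
      exact div_pos (mul_pos hp hD) hA)
  have hsa : ∑ y : Y, (P s).toReal * (M s y).toReal * (M' y s z).toReal =
      (P s).toReal * ∑ y : Y, (M s y).toReal * (M' y s z).toReal := by
    rw [Finset.mul_sum]
    exact Finset.sum_congr rfl fun y _ => (mul_assoc _ _ _)
  have hsb : ∑ y : Y, (P s).toReal * DDx P M M' i s y z / AAx P i s =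
      (P s).toReal * (∑ x : X, (P (Function.update s i x)).toReal *
        ∑ y : Y, (M (Function.update s i x) y).toReal * (M' y (Function.update s i x) z).toReal)
        / AAx P i s := by
    rw [← Finset.sum_div, ← Finset.mul_sum]
    congr 2
    simp only [DDx]
    rw [Finset.sum_comm]
    refine Finset.sum_congr rfl fun x _ => ?_
    rw [Finset.mul_sum]
    exact Finset.sum_congr rfl fun y _ => (mul_assoc _ _ _)
  simp only [hsa, hsb, div_div_eq_mul_div] at h
  exact h

private lemma key2 (P : PMF (Fin n → X)) (M : (Fin n → X) → PMF Y)
    (M' : Y → (Fin n → X) → PMF Z) (i : Fin n) :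
    (∑ s : Fin n → X, ∑ z : Z, ∑ y : Y,
        ((P s).toReal * (M s y).toReal * (M' y s z).toReal) *
          Real.log ((P s).toReal * (M s y).toReal * (M' y s z).toReal * AAx P i s /
            ((P s).toReal * DDx P M M' i s y z)))
      = condMI P M i + ∑ y : Y, T2x P M M' i y := by
  have hterm : ∀ (s : Fin n → X) (y : Y) (z : Z),
      ((P s).toReal * (M s y).toReal * (M' y s z).toReal) *
          Real.log ((P s).toReal * (M s y).toReal * (M' y s z).toReal * AAx P i s /
            ((P s).toReal * DDx P M M' i s y z))
        = ((P s).toReal * (M s y).toReal * (M' y s z).toReal) *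
            Real.log ((((P s).toReal * (M s y).toReal) * AAx P i s) /
              ((P s).toReal * CCx P M i s y))
          + ((P s).toReal * (M s y).toReal * (M' y s z).toReal) *
            Real.log ((M' y s z).toReal * CCx P M i s y / DDx P M M' i s y z) := by
    intro s y z
    by_cases h : (P s).toReal * (M s y).toReal * (M' y s z).toReal = 0
    · rw [h]; ring
    · rcases mul_ne_zero_iff.1 h with ⟨h1, h3⟩
      rcases mul_ne_zero_iff.1 h1 with ⟨hp0, hm0⟩
      have hp : 0 < (P s).toReal := lt_of_le_of_ne ENNReal.toReal_nonneg (Ne.symm hp0)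
      have hm : 0 < (M s y).toReal := lt_of_le_of_ne ENNReal.toReal_nonneg (Ne.symm hm0)
      have hm' : 0 < (M' y s z).toReal := lt_of_le_of_ne ENNReal.toReal_nonneg (Ne.symm h3)
      have hA : 0 < AAx P i s := lt_of_lt_of_le hp (le_AAx P i s)
      have hC : 0 < CCx P M i s y := lt_of_lt_of_le (mul_pos hp hm) (le_CCx P M i s y)
      have hD : 0 < DDx P M M' i s y z :=
        lt_of_lt_of_le (mul_pos (mul_pos hp hm) hm') (le_DDx P M M' i s y z)
      have hX1 : (0:ℝ) < (((P s).toReal * (M s y).toReal) * AAx P i s) /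
          ((P s).toReal * CCx P M i s y) :=
        div_pos (mul_pos (mul_pos hp hm) hA) (mul_pos hp hC)
      have hX2 : (0:ℝ) < (M' y s z).toReal * CCx P M i s y / DDx P M M' i s y z :=
        div_pos (mul_pos hm' hC) hD
      have hprod : (((P s).toReal * (M s y).toReal) * AAx P i s) /
            ((P s).toReal * CCx P M i s y) *
            ((M' y s z).toReal * CCx P M i s y / DDx P M M' i s y z)
          = (P s).toReal * (M s y).toReal * (M' y s z).toReal * AAx P i s /
            ((P s).toReal * DDx P M M' i s y z) := by
        field_simp
      rw [← hprod, Real.log_mul (ne_of_gt hX1) (ne_of_gt hX2), mul_add]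
  simp only [hterm, Finset.sum_add_distrib]
  congr 1
  · rw [condMI_eq]
    refine Finset.sum_congr rfl fun s _ => ?_
    rw [Finset.sum_comm]
    refine Finset.sum_congr rfl fun y _ => ?_
    have : ∀ z : Z, ((P s).toReal * (M s y).toReal * (M' y s z).toReal) *
        Real.log ((((P s).toReal * (M s y).toReal) * AAx P i s) /
          ((P s).toReal * CCx P M i s y))
        = (((P s).toReal * (M s y).toReal) *
            Real.log ((((P s).toReal * (M s y).toReal) * AAx P i s) /
              ((P s).toReal * CCx P M i s y))) * (M' y s z).toReal := by
      intro z; ring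
    simp only [this]
    rw [← Finset.mul_sum, pmf_sum_toReal, mul_one]
  · rw [sum_comm3]
    simp only [T2x]

private lemma key3 (P : PMF (Fin n → X)) (M : (Fin n → X) → PMF Y)
    (M' : Y → (Fin n → X) → PMF Z) (y : Y)
    (h : (∑ s : Fin n → X, P s * M s y) = 0) (i : Fin n) :
    T2x P M M' i y = 0 := by
  have hz : ∀ s : Fin n → X, (P s).toReal * (M s y).toReal = 0 := by
    intro s
    have : P s * M s y = 0 := by
      have := (Finset.sum_eq_zero_iff).1 h s (mem_univ s)
      exact this
    rw [← ENNReal.toReal_mul, this, ENNReal.toReal_zero]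
  simp only [T2x]
  refine Finset.sum_eq_zero fun s _ => Finset.sum_eq_zero fun z _ => ?_
  rw [hz s, zero_mul, zero_mul]

private lemma key4 (P : PMF (Fin n → X)) (M : (Fin n → X) → PMF Y)
    (M' : Y → (Fin n → X) → PMF Z) (y : Y)
    (h : (∑ s : Fin n → X, P s * M s y) ≠ 0) :
    ∃ Q : PMF (Fin n → X), ∀ i : Fin n,
      T2x P M M' i y = (∑ s : Fin n → X, P s * M s y).toReal * condMI Q (M' y) i := by
  set py : ENNReal := ∑ s : Fin n → X, P s * M s y with hpy
  have hpyt : py ≠ ⊤ := ENNReal.sum_ne_top.2 fun s _ =>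
    ENNReal.mul_ne_top (PMF.apply_ne_top _ _) (PMF.apply_ne_top _ _)
  have hτ : 0 < py.toReal := ENNReal.toReal_pos h hpyt
  set τ : ℝ := py.toReal with hτdef
  have hQsum : ∑ s : Fin n → X, P s * M s y / py = 1 := by
    simp only [div_eq_mul_inv, ← Finset.sum_mul]
    exact ENNReal.mul_inv_cancel h hpyt
  set Q : PMF (Fin n → X) := PMF.ofFintype (fun s => P s * M s y / py) hQsum with hQdef
  have hq : ∀ s : Fin n → X, (Q s).toReal = (P s).toReal * (M s y).toReal / τ := by
    intro s
    rw [hQdef, PMF.ofFintype_apply, ENNReal.toReal_div, ENNReal.toReal_mul]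
  refine ⟨Q, fun i => ?_⟩
  have hAQ : ∀ s : Fin n → X, AAx Q i s = CCx P M i s y / τ := by
    intro s
    simp only [AAx, CCx, hq, Finset.sum_div]
  have hCQ : ∀ (s : Fin n → X) (z : Z),
      CCx Q (M' y) i s z = DDx P M M' i s y z / τ := by
    intro s z
    simp only [CCx, DDx, hq, Finset.sum_div]
    exact Finset.sum_congr rfl fun x _ => by rw [div_mul_eq_mul_div]
  rw [condMI_eq, Finset.mul_sum]
  simp only [T2x]
  refine Finset.sum_congr rfl fun s _ => ?_
  rw [Finset.mul_sum]
  refine Finset.sum_congr rfl fun z _ => ?_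
  rw [hq, hAQ, hCQ]
  by_cases hzero : (P s).toReal * (M s y).toReal * (M' y s z).toReal = 0
  · have hq0 : (P s).toReal * (M s y).toReal / τ * (M' y s z).toReal = 0 := by
      rw [div_mul_eq_mul_div, hzero, zero_div]
    rw [hzero, hq0, zero_mul, zero_mul, mul_zero]
  · rcases mul_ne_zero_iff.1 hzero with ⟨h1, h3⟩
    rcases mul_ne_zero_iff.1 h1 with ⟨hp0, hm0⟩
    have hp : 0 < (P s).toReal := lt_of_le_of_ne ENNReal.toReal_nonneg (Ne.symm hp0)
    have hm : 0 < (M s y).toReal := lt_of_le_of_ne ENNReal.toReal_nonneg (Ne.symm hm0)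
    have hm' : 0 < (M' y s z).toReal := lt_of_le_of_ne ENNReal.toReal_nonneg (Ne.symm h3)
    have hC : 0 < CCx P M i s y := lt_of_lt_of_le (mul_pos hp hm) (le_CCx P M i s y)
    have hD : 0 < DDx P M M' i s y z :=
      lt_of_lt_of_le (mul_pos (mul_pos hp hm) hm') (le_DDx P M M' i s y z)
    have harg : (P s).toReal * (M s y).toReal / τ * (M' y s z).toReal *
          (CCx P M i s y / τ) /
          ((P s).toReal * (M s y).toReal / τ * (DDx P M M' i s y z / τ))
        = (M' y s z).toReal * CCx P M i s y / DDx P M M' i s y z := by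
      rw [div_eq_div_iff]
      · ring
      · exact (mul_pos (div_pos (mul_pos hp hm) hτ) (div_pos hD hτ)).ne'
      · exact hD.ne'
    rw [harg]
    have hcoef : τ * ((P s).toReal * (M s y).toReal / τ * (M' y s z).toReal)
        = (P s).toReal * (M s y).toReal * (M' y s z).toReal := by
      field_simp
    rw [← mul_assoc, hcoef]

private lemma pysum (P : PMF (Fin n → X)) (M : (Fin n → X) → PMF Y) :
    ∑ y : Y, (∑ s : Fin n → X, P s * M s y).toReal = 1 := by
  rw [← ENNReal.toReal_sum (fun y _ => ENNReal.sum_ne_top.2 fun s _ =>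
    ENNReal.mul_ne_top (PMF.apply_ne_top _ _) (PMF.apply_ne_top _ _))]
  rw [Finset.sum_comm]
  have : ∀ s : Fin n → X, ∑ y : Y, P s * M s y = P s := by
    intro s
    rw [← Finset.mul_sum, ← tsum_fintype (L := .unconditional _), PMF.tsum_coe, mul_one]
  simp only [this]
  rw [← tsum_fintype (L := .unconditional _), PMF.tsum_coe, ENNReal.toReal_one]

end Aux

/-- **Composition of MI stability.**  If `M : X^n → Y` is `ε`-MI stable and
`M' : Y × X^n → Z` is such that `M'(y, ·)` is `ε'`-MI stable for every `y ∈ Y`, then the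
composition `s ↦ M'(M(s), s)` is `(ε + ε')`-MI stable. -/
theorem miStable_composition {X Y Z : Type*} [Fintype X] [Fintype Y] [Fintype Z]
    {n : ℕ} {ε ε' : ℝ}
    (M : (Fin n → X) → PMF Y) (M' : Y → (Fin n → X) → PMF Z)
    (hM : ∀ P : PMF (Fin n → X),
      (1 / (n : ℝ)) * ∑ i : Fin n, condMI P M i ≤ ε)
    (hM' : ∀ (y : Y) (P : PMF (Fin n → X)),
      (1 / (n : ℝ)) * ∑ i : Fin n, condMI P (M' y) i ≤ ε') :
    ∀ P : PMF (Fin n → X),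
      (1 / (n : ℝ)) * ∑ i : Fin n, condMI P (fun s => (M s).bind fun y => M' y s) i ≤ ε + ε' := by
  intro P
  rcases Nat.eq_zero_or_pos n with hn | hn
  · subst hn
    obtain ⟨y, -⟩ := PMF.support_nonempty (M fun i => i.elim0)
    have h1 := hM P
    have h2 := hM' y P
    simp only [Nat.cast_zero, div_zero, zero_mul] at h1 h2 ⊢
    linarith
  · have hn0 : (n:ℝ) ≠ 0 := Nat.cast_ne_zero.2 hn.ne'
    have hnpos : (0:ℝ) < n := Nat.cast_pos.2 hn
    have hstep : ∀ i : Fin n, condMI P (fun s => (M s).bind fun y => M' y s) i ≤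
        condMI P M i + ∑ y : Y, T2x P M M' i y :=
      fun i => (key1 P M M' i).trans_eq (key2 P M M' i)
    have hsum : ∑ i : Fin n, condMI P (fun s => (M s).bind fun y => M' y s) i ≤
        (∑ i : Fin n, condMI P M i) + ∑ i : Fin n, ∑ y : Y, T2x P M M' i y := by
      rw [← Finset.sum_add_distrib]
      exact Finset.sum_le_sum fun i _ => hstep i
    have hMbound : ∑ i : Fin n, condMI P M i ≤ n * ε := by
      have h := mul_le_mul_of_nonneg_left (hM P) hnpos.le
      rwa [← mul_assoc, mul_one_div_cancel hn0, one_mul] at h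
    have hT2bound : ∑ i : Fin n, ∑ y : Y, T2x P M M' i y ≤ n * ε' := by
      rw [Finset.sum_comm]
      have hy : ∀ y : Y, ∑ i : Fin n, T2x P M M' i y ≤
          (∑ s : Fin n → X, P s * M s y).toReal * (n * ε') := by
        intro y
        by_cases h : (∑ s : Fin n → X, P s * M s y) = 0
        · simp only [h, ENNReal.toReal_zero, zero_mul]
          exact le_of_eq (Finset.sum_eq_zero fun i _ => key3 P M M' y h i)
        · obtain ⟨Q, hQ⟩ := key4 P M M' y h
          calc ∑ i : Fin n, T2x P M M' i y
              = (∑ s : Fin n → X, P s * M s y).toReal * ∑ i : Fin n, condMI Q (M' y) i := by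
                rw [Finset.mul_sum]; exact Finset.sum_congr rfl fun i _ => hQ i
            _ ≤ (∑ s : Fin n → X, P s * M s y).toReal * (n * ε') := by
                apply mul_le_mul_of_nonneg_left _ ENNReal.toReal_nonneg
                have h2 := mul_le_mul_of_nonneg_left (hM' y Q) hnpos.le
                rwa [← mul_assoc, mul_one_div_cancel hn0, one_mul] at h2
      calc ∑ y : Y, ∑ i : Fin n, T2x P M M' i y
          ≤ ∑ y : Y, (∑ s : Fin n → X, P s * M s y).toReal * (n * ε') :=
            Finset.sum_le_sum fun y _ => hy y
        _ = n * ε' := by rw [← Finset.sum_mul, pysum P M, one_mul]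
    calc (1 / (n : ℝ)) * ∑ i : Fin n, condMI P (fun s => (M s).bind fun y => M' y s) i
        ≤ (1 / (n : ℝ)) * (n * ε + n * ε') := by
          apply mul_le_mul_of_nonneg_left _ (by positivity)
          linarith
      _ = ε + ε' := by field_simp
end

section
/- Let μ, μ̃, σ, σ̃ ∈ ℝ with σ·σ̃ ≠ 0. Then D_KL( N(μ, σ²) ‖ N(μ̃, σ̃²) ) ≤ (1/2) · ( (μ−μ̃)²/σ² + (σ̃²/σ² − 1)² · min{ 1, (1/6)·(2 + σ²/σ̃²) } ) · (σ²/σ̃²). -/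
open MeasureTheory ProbabilityTheory
open Real Set
open scoped NNReal ENNReal

/-- Kullback–Leibler divergence between two measures, as the integral of the
log-likelihood ratio. -/
noncomputable def klDiv {Ω : Type*} [MeasurableSpace Ω] (μ ν : Measure Ω) : ℝ :=
  ∫ x, llr μ ν x ∂μ

lemma integral_x_mul_exp_neg_mul_sq {b : ℝ} (hb : 0 < b) :
    ∫ x : ℝ, x * rexp (-b * x ^ 2) = 0 := by
  have h := integral_neg_eq_self (fun x : ℝ => x * rexp (-b * x ^ 2)) (volume : Measure ℝ)
  simp only [neg_sq, neg_mul, integral_neg] at h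
  simp only [neg_mul]
  linarith

lemma integral_sq_mul_exp_neg_mul_sq {b : ℝ} (hb : 0 < b) :
    ∫ x : ℝ, x ^ 2 * rexp (-b * x ^ 2) = √π / (2 * b ^ ((3:ℝ)/2)) := by
  have h1 : ∀ x : ℝ, x ^ 2 * rexp (-b * x ^ 2) = (fun y : ℝ => y ^ 2 * rexp (-b * y ^ 2)) |x| := by
    intro x; simp [sq_abs]
  calc ∫ x : ℝ, x ^ 2 * rexp (-b * x ^ 2)
      = ∫ x : ℝ, (fun y : ℝ => y ^ 2 * rexp (-b * y ^ 2)) |x| := by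
        exact integral_congr_ae (Filter.Eventually.of_forall h1)
    _ = 2 * ∫ x in Ioi (0:ℝ), x ^ 2 * rexp (-b * x ^ 2) := integral_comp_abs (f := fun y : ℝ => y ^ 2 * rexp (-b * y ^ 2))
    _ = 2 * ∫ x in Ioi (0:ℝ), x ^ ((2:ℝ)) * rexp (-b * x ^ ((2:ℝ))) := by
        congr 1
        refine setIntegral_congr_fun measurableSet_Ioi (fun x hx => ?_)
        rw [← Real.rpow_natCast x 2]
        norm_num
    _ = 2 * (b ^ (-((2:ℝ) + 1) / 2) * (1 / 2) * Real.Gamma (((2:ℝ) + 1) / 2)) := by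
        rw [integral_rpow_mul_exp_neg_mul_rpow (by norm_num) (by norm_num) hb]
    _ = √π / (2 * b ^ ((3:ℝ)/2)) := by
        have hG : Real.Gamma ((3:ℝ)/2) = √π / 2 := by
          have h2 := Real.Gamma_add_one (s := (1/2 : ℝ)) (by norm_num)
          rw [Real.Gamma_one_half_eq] at h2
          norm_num at h2 ⊢
          linarith
        norm_num [hG]
        rw [Real.rpow_neg hb.le]
        field_simp

lemma integrable_sq_mul_exp_neg_mul_sq {b : ℝ} (hb : 0 < b) :
    Integrable fun x : ℝ => x ^ 2 * rexp (-b * x ^ 2) := by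
  have h := integrable_rpow_mul_exp_neg_mul_sq hb (s := 2) (by norm_num)
  refine h.congr (Filter.Eventually.of_forall fun x => ?_)
  show x ^ (2:ℝ) * rexp (-b * x ^ 2) = x ^ (2:ℕ) * rexp (-b * x ^ 2)
  congr 1
  rw [← Real.rpow_natCast x 2]
  norm_num

lemma gaussian_moment_aux (m c : ℝ) {v : ℝ≥0} (hv : v ≠ 0) :
    (Integrable fun x => (x - c) ^ 2 * gaussianPDFReal m v x) ∧
    ∫ x, (x - c) ^ 2 * gaussianPDFReal m v x = (v : ℝ) + (m - c) ^ 2 := by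
  have hv0 : (0:ℝ) < v := NNReal.coe_pos.mpr (pos_iff_ne_zero.mpr hv)
  set K : ℝ := (√(2 * π * v))⁻¹ with hK
  set b : ℝ := (2 * (v:ℝ))⁻¹ with hb
  have hbpos : 0 < b := by positivity
  set g : ℝ → ℝ := fun t => (t + (m - c)) ^ 2 * (K * rexp (-b * t ^ 2)) with hg
  have hfun : ∀ x, (x - c) ^ 2 * gaussianPDFReal m v x = g (x - m) := by
    intro x
    simp only [g, gaussianPDFReal]
    rw [show x - m + (m - c) = x - c by ring]
    rw [show -b * (x - m) ^ 2 = -(x - m) ^ 2 / (2 * v) by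
      rw [hb]; field_simp; try ring]
    try ring
  have hexp : g = fun t => K * (t ^ 2 * rexp (-b * t ^ 2))
      + (2 * (m - c) * K) * (t * rexp (-b * t ^ 2))
      + ((m - c) ^ 2 * K) * rexp (-b * t ^ 2) := by
    funext t; simp only [g]; ring
  have hint : Integrable g := by
    rw [hexp]
    exact (((integrable_sq_mul_exp_neg_mul_sq hbpos).const_mul K).add
      ((integrable_mul_exp_neg_mul_sq hbpos).const_mul _)).add
      ((integrable_exp_neg_mul_sq hbpos).const_mul _)
  have hIg : ∫ t, g t = (v : ℝ) + (m - c) ^ 2 := by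
    have hIA : Integrable (fun t : ℝ => K * (t ^ 2 * rexp (-b * t ^ 2))) :=
      (integrable_sq_mul_exp_neg_mul_sq hbpos).const_mul K
    have hIB : Integrable (fun t : ℝ => (2 * (m - c) * K) * (t * rexp (-b * t ^ 2))) :=
      (integrable_mul_exp_neg_mul_sq hbpos).const_mul _
    have hIC : Integrable (fun t : ℝ => ((m - c) ^ 2 * K) * rexp (-b * t ^ 2)) :=
      (integrable_exp_neg_mul_sq hbpos).const_mul _
    have step : ∫ t, g t = (∫ t : ℝ, K * (t ^ 2 * rexp (-b * t ^ 2)))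
        + (∫ t : ℝ, (2 * (m - c) * K) * (t * rexp (-b * t ^ 2)))
        + (∫ t : ℝ, ((m - c) ^ 2 * K) * rexp (-b * t ^ 2)) := by
      rw [hexp]
      exact (integral_add (hIA.add hIB) hIC).trans (by congr 1; exact integral_add hIA hIB)
    rw [step, integral_const_mul, integral_const_mul, integral_const_mul,
      integral_sq_mul_exp_neg_mul_sq hbpos, integral_x_mul_exp_neg_mul_sq hbpos,
      integral_gaussian]
    have h1 : K * (√π / (2 * b ^ ((3:ℝ)/2))) = (v : ℝ) := by
      have hsq : (K * (√π / (2 * b ^ ((3:ℝ)/2)))) ^ 2 = ((v:ℝ)) ^ 2 := by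
        have h2 : (b ^ ((3:ℝ)/2)) ^ (2:ℕ) = b ^ (3:ℕ) := by
          rw [← Real.rpow_natCast (b ^ ((3:ℝ)/2)) 2, ← Real.rpow_mul hbpos.le,
            show (3:ℝ)/2 * ((2:ℕ):ℝ) = ((3:ℕ):ℝ) by norm_num, Real.rpow_natCast]
        have h3 : K ^ 2 = (2 * π * v)⁻¹ := by
          rw [hK, ← Real.sqrt_inv, Real.sq_sqrt (by positivity)]
        rw [mul_pow, div_pow, mul_pow, h2, h3, Real.sq_sqrt Real.pi_pos.le, hb]
        field_simp
        try ring
        try rfl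
      have hpos1 : 0 ≤ K * (√π / (2 * b ^ ((3:ℝ)/2))) := by positivity
      nlinarith
    have h2 : K * √(π / b) = 1 := by
      have hsq : (K * √(π / b)) ^ 2 = 1 := by
        have h3 : K ^ 2 = (2 * π * v)⁻¹ := by
          rw [hK, ← Real.sqrt_inv, Real.sq_sqrt (by positivity)]
        rw [mul_pow, h3, Real.sq_sqrt (by positivity), hb]
        field_simp
      have hpos1 : 0 ≤ K * √(π / b) := by positivity
      nlinarith
    rw [h1, show (m - c) ^ 2 * K * √(π / b) = (m - c) ^ 2 * (K * √(π / b)) by ring, h2]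
    ring
  constructor
  · exact (hint.comp_sub_right m).congr
      (Filter.Eventually.of_forall fun x => (hfun x).symm)
  · calc ∫ x, (x - c) ^ 2 * gaussianPDFReal m v x = ∫ x, g (x - m) :=
          integral_congr_ae (Filter.Eventually.of_forall hfun)
    _ = ∫ t, g t := integral_sub_right_eq_self g m
    _ = (v : ℝ) + (m - c) ^ 2 := hIg

lemma aux_g_nonneg {r : ℝ} (hr : 0 < r) :
    0 ≤ Real.log r + r ^ 2 / 6 - r + 1 / 2 + 1 / (3 * r) := by
  set g : ℝ → ℝ := fun x => Real.log x + x ^ 2 / 6 - x + 1 / 2 + 1 / (3 * x) with hgdef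
  have hderiv : ∀ x : ℝ, 0 < x → HasDerivAt g ((x - 1) ^ 3 / (3 * x ^ 2)) x := by
    intro x hx
    have hx0 : x ≠ 0 := ne_of_gt hx
    have h3 : HasDerivAt (fun y : ℝ => 3 * y) 3 x := by
      simpa using (hasDerivAt_id x).const_mul (3:ℝ)
    have h4 : HasDerivAt (fun y : ℝ => 1 / (3 * y)) (-3 / (3 * x) ^ 2) x := by
      have := h3.inv (by positivity : (0:ℝ) < 3 * x).ne'
      rw [show (fun y : ℝ => 1 / (3 * y)) = (fun y : ℝ => 3 * y)⁻¹ by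
        funext y; simp only [Pi.inv_apply, one_div]]
      exact this
    have h1 : HasDerivAt (fun y : ℝ => Real.log y + y ^ 2 / 6 - y + 1 / 2 + 1 / (3 * y))
        (x⁻¹ + (2 * x ^ 1) / 6 - 1 + 0 + -3 / (3 * x) ^ 2) x :=
      ((((Real.hasDerivAt_log hx0).add ((hasDerivAt_pow 2 x).div_const 6)).sub
        (hasDerivAt_id x)).add (hasDerivAt_const x (1/2))).add h4
    convert h1 using 1
    field_simp
    ring
  have hg1 : g 1 = 0 := by norm_num [hgdef]
  have hcont : ∀ s : Set ℝ, s ⊆ Set.Ioi 0 → ContinuousOn g s := by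
    intro s hs
    exact fun x hx => ((hderiv x (hs hx)).continuousAt).continuousWithinAt
  rcases le_total 1 r with hr1 | hr1
  · have hmono : MonotoneOn g (Set.Icc 1 r) := by
      refine monotoneOn_of_deriv_nonneg (convex_Icc 1 r)
        (hcont _ (fun x hx => lt_of_lt_of_le one_pos hx.1)) ?_ ?_
      · intro x hx
        rw [interior_Icc] at hx
        exact ((hderiv x (lt_trans one_pos hx.1)).differentiableAt).differentiableWithinAt
      · intro x hx
        rw [interior_Icc] at hx
        rw [(hderiv x (lt_trans one_pos hx.1)).deriv]
        have h5 : (0:ℝ) ≤ (x - 1) ^ 3 := pow_nonneg (by linarith [hx.1]) 3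
        exact div_nonneg h5 (by positivity)
    have := hmono (Set.left_mem_Icc.mpr hr1) (Set.right_mem_Icc.mpr hr1) hr1
    rw [hg1] at this
    simpa [hgdef] using this
  · have hanti : AntitoneOn g (Set.Icc r 1) := by
      refine antitoneOn_of_deriv_nonpos (convex_Icc r 1)
        (hcont _ (fun x hx => lt_of_lt_of_le hr hx.1)) ?_ ?_
      · intro x hx
        rw [interior_Icc] at hx
        exact ((hderiv x (lt_trans hr hx.1)).differentiableAt).differentiableWithinAt
      · intro x hx
        rw [interior_Icc] at hx
        rw [(hderiv x (lt_trans hr hx.1)).deriv]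
        apply div_nonpos_of_nonpos_of_nonneg
        · exact Odd.pow_nonpos ⟨1, by norm_num⟩ (by linarith [hx.2])
        · positivity
    have := hanti (Set.left_mem_Icc.mpr hr1) (Set.right_mem_Icc.mpr hr1) hr1
    rw [hg1] at this
    simpa [hgdef] using this

lemma core_ineq {r : ℝ} (hr : 0 < r) :
    r - 1 - Real.log r ≤ (1 - r) ^ 2 / r * min 1 (1 / 6 * (2 + r)) := by
  have hlog_ge : 1 - 1/r ≤ Real.log r := by
    have h := Real.log_le_sub_one_of_pos (show (0:ℝ) < 1/r by positivity)
    rw [Real.log_div one_ne_zero (ne_of_gt hr), Real.log_one] at h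
    have : -Real.log r ≤ 1/r - 1 := by linarith
    linarith
  rcases min_cases (1:ℝ) (1 / 6 * (2 + r)) with ⟨hmin, _⟩ | ⟨hmin, _⟩ <;> rw [hmin]
  · have key : (1 - r) ^ 2 / r - (r - 1 - Real.log r) = 1/r - 1 + Real.log r := by
      field_simp
      ring
    have h2 : (1 - r) ^ 2 / r * 1 = (1 - r) ^ 2 / r := mul_one _
    rw [h2]
    linarith
  · have hg := aux_g_nonneg hr
    have key : (1 - r) ^ 2 / r * (1 / 6 * (2 + r)) - (r - 1 - Real.log r)
        = Real.log r + r ^ 2 / 6 - r + 1 / 2 + 1 / (3 * r) := by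
      field_simp
      ring
    linarith

lemma integral_llr_gaussian (m mt : ℝ) {v vt : ℝ≥0} (hv : v ≠ 0) (hvt : vt ≠ 0) :
    ∫ x, llr (gaussianReal m v) (gaussianReal mt vt) x ∂(gaussianReal m v)
      = 1 / 2 * Real.log ((vt:ℝ) / (v:ℝ)) + ((v:ℝ) + (m - mt) ^ 2) / (2 * vt) - 1 / 2 := by
  have hv0 : (0:ℝ) < v := NNReal.coe_pos.mpr (pos_iff_ne_zero.mpr hv)
  have hvt0 : (0:ℝ) < vt := NNReal.coe_pos.mpr (pos_iff_ne_zero.mpr hvt)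
  set P := gaussianReal m v with hP
  set Q := gaussianReal mt vt with hQ
  set ratio : ℝ → ℝ≥0∞ := fun x => gaussianPDF m v x / gaussianPDF mt vt x with hratio
  have hmeas : Measurable ratio :=
    (measurable_gaussianPDF m v).div (measurable_gaussianPDF mt vt)
  have hQP : Q.withDensity ratio = P := by
    rw [hP, hQ, gaussianReal_of_var_ne_zero mt hvt, gaussianReal_of_var_ne_zero m hv,
      ← withDensity_mul volume (measurable_gaussianPDF mt vt) hmeas]
    apply withDensity_congr_ae
    refine Filter.Eventually.of_forall fun x => ?_
    have h0 : gaussianPDF mt vt x ≠ 0 := (gaussianPDF_pos mt hvt x).ne'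
    have htop : gaussianPDF mt vt x ≠ ⊤ := ENNReal.ofReal_ne_top
    rw [hratio]
    exact ENNReal.mul_div_cancel h0 htop
  have h2 : P.rnDeriv Q =ᵐ[Q] ratio := by
    rw [← hQP]
    exact Measure.rnDeriv_withDensity Q hmeas
  have hPQ : P ≪ Q :=
    (gaussianReal_absolutelyContinuous m hv).trans (gaussianReal_absolutelyContinuous' mt hvt)
  have h3 : P.rnDeriv Q =ᵐ[P] ratio := hPQ.ae_le h2
  have h4 : llr P Q =ᵐ[P]
      fun x => Real.log (gaussianPDFReal m v x / gaussianPDFReal mt vt x) := by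
    filter_upwards [h3] with x hx
    rw [llr, hx, hratio]
    congr 1
    simp only [gaussianPDF]
    rw [ENNReal.toReal_div, ENNReal.toReal_ofReal
      (gaussianPDFReal_nonneg _ _ _), ENNReal.toReal_ofReal (gaussianPDFReal_nonneg _ _ _)]
  set C : ℝ := Real.log (√(2 * Real.pi * vt)) - Real.log (√(2 * Real.pi * v)) with hC
  have h5 : ∀ x, Real.log (gaussianPDFReal m v x / gaussianPDFReal mt vt x)
      = C + (x - mt) ^ 2 / (2 * vt) - (x - m) ^ 2 / (2 * v) := by
    intro x
    rw [gaussianPDFReal, gaussianPDFReal,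
      Real.log_div (by positivity) (by positivity),
      Real.log_mul (by positivity) (by positivity),
      Real.log_mul (by positivity) (by positivity),
      Real.log_inv, Real.log_inv, Real.log_exp, Real.log_exp, hC]
    ring
  have hint : ∫ x, llr P Q x ∂P
      = ∫ x, (C + (x - mt) ^ 2 / (2 * vt) - (x - m) ^ 2 / (2 * v)) ∂P := by
    refine integral_congr_ae (h4.trans (Filter.Eventually.of_forall fun x => h5 x))
  rw [hint]
  -- replace P by withDensity
  have hPd : P = volume.withDensity (fun x => ((gaussianPDFReal m v x).toNNReal : ℝ≥0∞)) := by
    rw [hP, gaussianReal_of_var_ne_zero m hv]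
    rfl
  have hmeas2 : Measurable fun x => (gaussianPDFReal m v x).toNNReal :=
    (measurable_gaussianPDFReal m v).real_toNNReal
  rw [hPd, integral_withDensity_eq_integral_smul hmeas2]
  have hsmul : ∀ x : ℝ, (gaussianPDFReal m v x).toNNReal
        • (C + (x - mt) ^ 2 / (2 * vt) - (x - m) ^ 2 / (2 * v))
      = C * gaussianPDFReal m v x
        + (2 * (vt:ℝ))⁻¹ * ((x - mt) ^ 2 * gaussianPDFReal m v x)
        - (2 * (v:ℝ))⁻¹ * ((x - m) ^ 2 * gaussianPDFReal m v x) := by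
    intro x
    rw [NNReal.smul_def, smul_eq_mul, Real.coe_toNNReal _ (gaussianPDFReal_nonneg m v x)]
    ring
  rw [integral_congr_ae (Filter.Eventually.of_forall hsmul)]
  have hI0 : Integrable (fun x => C * gaussianPDFReal m v x) :=
    (integrable_gaussianPDFReal m v).const_mul C
  have hIt : Integrable (fun x =>
      (2 * (vt:ℝ))⁻¹ * ((x - mt) ^ 2 * gaussianPDFReal m v x)) :=
    ((gaussian_moment_aux m mt hv).1).const_mul _
  have hIm : Integrable (fun x =>
      (2 * (v:ℝ))⁻¹ * ((x - m) ^ 2 * gaussianPDFReal m v x)) :=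
    ((gaussian_moment_aux m m hv).1).const_mul _
  have hsplit : ∫ x, (C * gaussianPDFReal m v x
        + (2 * (vt:ℝ))⁻¹ * ((x - mt) ^ 2 * gaussianPDFReal m v x)
        - (2 * (v:ℝ))⁻¹ * ((x - m) ^ 2 * gaussianPDFReal m v x))
      = (∫ x, C * gaussianPDFReal m v x)
        + (∫ x, (2 * (vt:ℝ))⁻¹ * ((x - mt) ^ 2 * gaussianPDFReal m v x))
        - ∫ x, (2 * (v:ℝ))⁻¹ * ((x - m) ^ 2 * gaussianPDFReal m v x) :=
    (integral_sub (hI0.add hIt) hIm).trans (by congr 1; exact integral_add hI0 hIt)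
  rw [hsplit, integral_const_mul, integral_const_mul, integral_const_mul,
    integral_gaussianPDFReal_eq_one m hv,
    (gaussian_moment_aux m mt hv).2, (gaussian_moment_aux m m hv).2]
  have hCval : C = 1 / 2 * Real.log ((vt:ℝ) / (v:ℝ)) := by
    rw [hC, Real.log_sqrt (by positivity), Real.log_sqrt (by positivity),
      ← sub_div, ← Real.log_div (by positivity) (by positivity)]
    rw [show (2 * Real.pi * (vt:ℝ)) / (2 * Real.pi * (v:ℝ)) = (vt:ℝ) / (v:ℝ) by
      field_simp]
    ring
  rw [hCval]
  field_simp
  ring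

/-- **Upper bound on the KL divergence between Gaussians.**  For `μ, μ̃, σ, σ̃ ∈ ℝ` with
`σ·σ̃ ≠ 0`,
`D_KL(N(μ,σ²) ‖ N(μ̃,σ̃²)) ≤ (1/2)·((μ−μ̃)²/σ² + (σ̃²/σ²−1)²·min{1, (1/6)(2+σ²/σ̃²)})·(σ²/σ̃²)`. -/
theorem gaussian_klDiv_upper_bound (μ μt σ σt : ℝ) (h : σ * σt ≠ 0) :
    klDiv (gaussianReal μ (σ ^ 2).toNNReal) (gaussianReal μt (σt ^ 2).toNNReal) ≤
      1 / 2 * ((μ - μt) ^ 2 / σ ^ 2 +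
          (σt ^ 2 / σ ^ 2 - 1) ^ 2 * min 1 (1 / 6 * (2 + σ ^ 2 / σt ^ 2))) *
        (σ ^ 2 / σt ^ 2) := by
  have hσ : σ ≠ 0 := fun hs => h (by rw [hs, zero_mul])
  have hσt : σt ≠ 0 := fun hs => h (by rw [hs, mul_zero])
  have hA : (0:ℝ) < σ ^ 2 := pow_two_pos_of_ne_zero hσ
  have hB : (0:ℝ) < σt ^ 2 := pow_two_pos_of_ne_zero hσt
  have hv : (σ ^ 2).toNNReal ≠ 0 := by
    rw [Ne, Real.toNNReal_eq_zero]; linarith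
  have hvt : (σt ^ 2).toNNReal ≠ 0 := by
    rw [Ne, Real.toNNReal_eq_zero]; linarith
  have hcoe : (((σ ^ 2).toNNReal : ℝ≥0) : ℝ) = σ ^ 2 := Real.coe_toNNReal _ hA.le
  have hcoet : (((σt ^ 2).toNNReal : ℝ≥0) : ℝ) = σt ^ 2 := Real.coe_toNNReal _ hB.le
  rw [klDiv, integral_llr_gaussian μ μt hv hvt, hcoe, hcoet]
  have hr : (0:ℝ) < σ ^ 2 / σt ^ 2 := by positivity
  have core := core_ineq hr
  have hlog : Real.log (σt ^ 2 / σ ^ 2) = -Real.log (σ ^ 2 / σt ^ 2) := by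
    rw [← Real.log_inv]
    congr 1
    rw [inv_div]
  rw [hlog]
  set M : ℝ := min 1 (1 / 6 * (2 + σ ^ 2 / σt ^ 2)) with hM
  set L : ℝ := Real.log (σ ^ 2 / σt ^ 2) with hL
  have heq : 1 / 2 * ((μ - μt) ^ 2 / σ ^ 2 + (σt ^ 2 / σ ^ 2 - 1) ^ 2 * M) * (σ ^ 2 / σt ^ 2)
      - (1 / 2 * (-L) + (σ ^ 2 + (μ - μt) ^ 2) / (2 * σt ^ 2) - 1 / 2)
      = 1 / 2 * ((1 - σ ^ 2 / σt ^ 2) ^ 2 / (σ ^ 2 / σt ^ 2) * M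
          - (σ ^ 2 / σt ^ 2 - 1 - L)) := by
    field_simp
    ring
  linarith [core, heq]
end

section
/- Let μ, μ̃, σ, σ̃ ∈ ℝ with σ, σ̃ > 0. Then D_KL( Lap(μ, σ) ‖ Lap(μ̃, σ̃) ) = (σ/σ̃)·( e^{−|μ̃−μ|/σ} − (1 − |μ̃−μ|/σ) ) + σ/σ̃ − 1 − ln(σ/σ̃), and this quantity is at most (μ̃−μ)²/(2σσ̃) + (1/7)·(σ̃²/σ² − 1)²·(σ²/σ̃²). -/
open MeasureTheory

/-- The Laplace distribution on `ℝ` with mean `μ` and scale `σ`, with density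
`(1/(2σ))·exp(−|x−μ|/σ)` with respect to Lebesgue measure. -/
noncomputable def laplace (μ σ : ℝ) : Measure ℝ :=
  volume.withDensity fun x => ENNReal.ofReal (1 / (2 * σ) * Real.exp (-|x - μ| / σ))

section LaplaceKL

open Real Set Filter Topology
open scoped ENNReal NNReal

lemma hasDerivAt_affine_exp (A B x : ℝ) :
    HasDerivAt (fun y => -((A + B + B * y) * rexp (-y))) ((A + B * x) * rexp (-x)) x := by
  have h1 : HasDerivAt (fun y : ℝ => A + B + B * y) B x := by
    simpa using ((hasDerivAt_id x).const_mul B).const_add (A + B)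
  have h2 : HasDerivAt (fun y : ℝ => rexp (-y)) (-rexp (-x)) x := by
    simpa using ((hasDerivAt_id x).neg).exp
  exact (h1.fun_mul h2).fun_neg.congr_deriv (by ring)

lemma tendsto_affine_exp (A B : ℝ) :
    Tendsto (fun y => -((A + B + B * y) * rexp (-y))) atTop (𝓝 0) := by
  have h0 : Tendsto (fun y : ℝ => rexp (-y)) atTop (𝓝 0) := tendsto_exp_neg_atTop_nhds_zero
  have h1 : Tendsto (fun y : ℝ => y * rexp (-y)) atTop (𝓝 0) := by
    simpa using tendsto_pow_mul_exp_neg_atTop_nhds_zero 1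
  have h2 := (((h0.const_mul (A + B)).add (h1.const_mul B)).neg)
  simp only [mul_zero, add_zero, neg_zero] at h2
  refine h2.congr fun y => ?_
  ring

lemma integrableOn_affine_exp {A B c : ℝ} (h : ∀ x ∈ Ici c, 0 ≤ A + B * x) :
    IntegrableOn (fun x => (A + B * x) * rexp (-x)) (Ioi c) :=
  integrableOn_Ioi_deriv_of_nonneg' (fun x _ => hasDerivAt_affine_exp A B x)
    (fun x hx => mul_nonneg (h x (Ioi_subset_Ici_self hx)) (exp_nonneg _)) (tendsto_affine_exp A B)

lemma integral_affine_exp {A B c : ℝ} (h : ∀ x ∈ Ici c, 0 ≤ A + B * x) :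
    ∫ x in Ioi c, (A + B * x) * rexp (-x) = (A + B + B * c) * rexp (-c) := by
  rw [integral_Ioi_of_hasDerivAt_of_nonneg' (fun x _ => hasDerivAt_affine_exp A B x)
    (fun x hx => mul_nonneg (h x (Ioi_subset_Ici_self hx)) (exp_nonneg _)) (tendsto_affine_exp A B)]
  ring

lemma integrableOn_Iic_comp_neg {f : ℝ → ℝ} {c : ℝ} (hf : IntegrableOn f (Ioi (-c))) :
    IntegrableOn (fun x => f (-x)) (Iic c) := by
  have m : MeasurableEmbedding fun x : ℝ => -x := (Homeomorph.neg ℝ).measurableEmbedding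
  rw [IntegrableOn, show (volume : Measure ℝ).restrict (Iic c)
      = (Measure.map (fun x : ℝ => -x) volume).restrict (Iic c) from by
        rw [Measure.map_neg_eq_self]]
  rw [← IntegrableOn, m.integrableOn_map_iff]
  simp_rw [Function.comp_def, neg_preimage, neg_Iic]
  have : ((fun x : ℝ => f (- -x))) = f := by funext x; simp
  rw [this]
  exact (integrableOn_Ici_iff_integrableOn_Ioi).mpr hf

lemma intOn_abs (b : ℝ) : IntegrableOn (fun x : ℝ => |x - b| * rexp (-|x|)) (Ioi 0) := by
  have hint : IntegrableOn (fun x => (|b| + 1 * x) * rexp (-x)) (Ioi 0) :=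
    integrableOn_affine_exp fun x hx => by
      have : (0:ℝ) ≤ x := hx
      positivity
  have hmeas : AEStronglyMeasurable (fun x : ℝ => |x - b| * rexp (-|x|))
      (volume.restrict (Ioi 0)) := by
    apply Continuous.aestronglyMeasurable
    continuity
  refine Integrable.mono' hint hmeas ?_
  · filter_upwards [ae_restrict_mem measurableSet_Ioi] with x hx
    have hx0 : (0:ℝ) < x := hx
    have h1 : |x - b| ≤ |b| + 1 * x := by
      calc |x - b| ≤ |x| + |b| := abs_sub x b
        _ = |b| + 1 * x := by rw [abs_of_pos hx0]; ring
    rw [Real.norm_eq_abs, abs_of_nonneg (mul_nonneg (abs_nonneg _) (exp_nonneg _)),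
      abs_of_pos hx0]
    exact mul_le_mul_of_nonneg_right h1 (exp_nonneg _)

lemma K_integrable (b : ℝ) : Integrable (fun x : ℝ => |x - b| * rexp (-|x|)) := by
  have h2 : IntegrableOn (fun x : ℝ => |x - b| * rexp (-|x|)) (Iic 0) := by
    have h3 := intOn_abs (-b)
    have h4 : IntegrableOn (fun x : ℝ => |(-x) - (-b)| * rexp (-|(-x)|)) (Iic 0) :=
      integrableOn_Iic_comp_neg (f := fun x : ℝ => |x - (-b)| * rexp (-|x|)) (c := 0)
        (by simpa using h3)
    refine h4.congr_fun (fun x _ => ?_) measurableSet_Iic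
    dsimp only
    rw [abs_neg, show -x - -b = -(x - b) by ring, abs_neg]
  rw [← integrableOn_univ, ← Iic_union_Ioi (a := (0:ℝ))]
  exact h2.union (intOn_abs b)

lemma J_integrable : Integrable (fun x : ℝ => rexp (-|x|)) := by
  have h1 : IntegrableOn (fun x : ℝ => rexp (-|x|)) (Ioi 0) := by
    have hint := integrableOn_affine_exp (A := 1) (B := 0) (c := 0) (fun x _ => by norm_num)
    refine hint.congr_fun (fun x hx => ?_) measurableSet_Ioi
    have hx0 : (0:ℝ) < x := hx
    rw [abs_of_pos hx0]; ring
  have h2 : IntegrableOn (fun x : ℝ => rexp (-|x|)) (Iic 0) := by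
    have := integrableOn_Iic_comp_neg (c := 0) (f := fun x : ℝ => rexp (-|x|))
      (by simpa using h1)
    simpa using this
  rw [← integrableOn_univ, ← Iic_union_Ioi (a := (0:ℝ))]
  exact h2.union h1

lemma J_val : ∫ x : ℝ, rexp (-|x|) = 2 := by
  rw [integral_comp_abs (f := fun x : ℝ => rexp (-x)), integral_exp_neg_Ioi_zero]
  norm_num

lemma K_val (a : ℝ) (ha : 0 ≤ a) :
    ∫ x : ℝ, |x - a| * rexp (-|x|) = 2 * a + 2 * rexp (-a) := by
  have hK := K_integrable a
  have hIic : ∫ x in Iic (0:ℝ), |x - a| * rexp (-|x|) = a + 1 := by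
    have h1 : ∫ x in Iic (0:ℝ), |x - a| * rexp (-|x|)
        = ∫ x in Iic (0:ℝ), (fun y : ℝ => |y + a| * rexp (-|y|)) (-x) := by
      refine setIntegral_congr_fun measurableSet_Iic fun x _ => ?_
      simp only
      rw [show -x + a = -(x - a) by ring, abs_neg, abs_neg]
    have h1' := integral_comp_neg_Iic (0:ℝ) (fun y : ℝ => |y + a| * rexp (-|y|))
    rw [h1, h1', neg_zero]
    have h2 : ∫ x in Ioi (0:ℝ), |x + a| * rexp (-|x|) = ∫ x in Ioi (0:ℝ), (a + 1 * x) * rexp (-x) := by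
      refine setIntegral_congr_fun measurableSet_Ioi fun x hx => ?_
      have hx0 : (0:ℝ) < x := hx
      rw [abs_of_pos hx0, abs_of_nonneg (by linarith), one_mul, add_comm]
    rw [h2, integral_affine_exp (fun x hx => by have : (0:ℝ) ≤ x := hx; linarith)]
    simp
  have hmid : ∫ x in Ioc (0:ℝ) a, |x - a| * rexp (-|x|) = a - 1 + rexp (-a) := by
    have h1 : ∫ x in Ioc (0:ℝ) a, |x - a| * rexp (-|x|)
        = ∫ x in Ioc (0:ℝ) a, (a - x) * rexp (-x) := by
      refine setIntegral_congr_fun measurableSet_Ioc fun x hx => ?_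
      rw [abs_of_pos hx.1, abs_of_nonpos (by linarith [hx.2]), neg_sub]
    rw [h1, ← intervalIntegral.integral_of_le ha]
    have h2 : ∀ x ∈ uIcc (0:ℝ) a, HasDerivAt (fun y => -((a + -1 + -1 * y) * rexp (-y)))
        ((a + -1 * x) * rexp (-x)) x := fun x _ => hasDerivAt_affine_exp a (-1) x
    have h3 : IntervalIntegrable (fun x => (a + -1 * x) * rexp (-x)) volume 0 a := by
      apply Continuous.intervalIntegrable
      continuity
    have := intervalIntegral.integral_eq_sub_of_hasDerivAt h2 h3
    have heq : ∫ x in (0:ℝ)..a, (a - x) * rexp (-x) = ∫ x in (0:ℝ)..a, (a + -1 * x) * rexp (-x) := by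
      congr 1; funext x; ring_nf
    rw [heq, this]
    simp only [neg_mul, one_mul, neg_zero, exp_zero]
    ring
  have htail : ∫ x in Ioi a, |x - a| * rexp (-|x|) = rexp (-a) := by
    have h1 : ∫ x in Ioi a, |x - a| * rexp (-|x|)
        = ∫ x in Ioi a, (-a + 1 * x) * rexp (-x) := by
      refine setIntegral_congr_fun measurableSet_Ioi fun x hx => ?_
      have hx0 : a < x := hx
      rw [abs_of_nonneg (by linarith), abs_of_pos (lt_of_le_of_lt ha hx0)]
      ring_nf
    rw [h1, integral_affine_exp (fun x hx => by have : a ≤ x := hx; linarith)]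
    ring_nf
  have hsplit2 : ∫ x in Ioi (0:ℝ), |x - a| * rexp (-|x|)
      = (∫ x in Ioc (0:ℝ) a, |x - a| * rexp (-|x|)) + ∫ x in Ioi a, |x - a| * rexp (-|x|) := by
    rw [← setIntegral_union (Ioc_disjoint_Ioi le_rfl) measurableSet_Ioi
      (hK.integrableOn) (hK.integrableOn), Ioc_union_Ioi_eq_Ioi ha]
  rw [← intervalIntegral.integral_Iic_add_Ioi (hK.integrableOn) (hK.integrableOn), hIic, hsplit2, hmid, htail]
  ring

lemma K_val' (a : ℝ) :
    ∫ x : ℝ, |x - a| * rexp (-|x|) = 2 * |a| + 2 * rexp (-|a|) := by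
  rcases le_or_gt 0 a with ha | ha
  · rw [K_val a ha, abs_of_nonneg ha]
  · have h1 : ∫ x : ℝ, |x - a| * rexp (-|x|)
        = ∫ x : ℝ, (fun y : ℝ => |y - (-a)| * rexp (-|y|)) ((-1 : ℝ) * x) := by
      congr 1; funext x
      simp only [neg_one_mul]
      rw [show -x - -a = -(x - a) by ring, abs_neg, abs_neg]
    rw [h1, Measure.integral_comp_mul_left (fun y : ℝ => |y - (-a)| * rexp (-|y|)) (-1)]
    rw [K_val (-a) (by linarith)]
    have h2 : |(-1 : ℝ)⁻¹| = 1 := by norm_num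
    rw [h2, one_smul, abs_of_neg ha]

lemma lap_norm_integrable (μ σ : ℝ) (hσ : 0 < σ) :
    Integrable (fun x : ℝ => 1 / (2 * σ) * rexp (-|x - μ| / σ)) := by
  have h1 : Integrable (fun x : ℝ => (fun y : ℝ => rexp (-|y|)) ((x - μ) / σ)) := by
    have := (J_integrable.comp_div (R := σ) hσ.ne').comp_sub_right μ
    simpa using this
  have h2 := h1.const_mul (1 / (2 * σ))
  refine h2.congr (Eventually.of_forall fun x => ?_)
  simp only
  rw [abs_div, abs_of_pos hσ, neg_div]

lemma lap_norm_val (μ σ : ℝ) (hσ : 0 < σ) :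
    ∫ x : ℝ, 1 / (2 * σ) * rexp (-|x - μ| / σ) = 1 := by
  have h1 : ∫ x : ℝ, 1 / (2 * σ) * rexp (-|x - μ| / σ)
      = 1 / (2 * σ) * ∫ x : ℝ, (fun y : ℝ => rexp (-|y / σ|)) (x - μ) := by
    rw [← integral_const_mul]
    congr 1; funext x
    simp only [abs_div, abs_of_pos hσ, neg_div]
  rw [h1, integral_sub_right_eq_self (fun y : ℝ => rexp (-|y / σ|)) μ]
  have h2 : ∫ x : ℝ, rexp (-|x / σ|) = |σ| • ∫ y : ℝ, rexp (-|y|) :=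
    Measure.integral_comp_div (fun y : ℝ => rexp (-|y|)) σ
  rw [h2, J_val, abs_of_pos hσ, smul_eq_mul]
  field_simp

lemma lap_abs_integrable (μ σ c : ℝ) (hσ : 0 < σ) :
    Integrable (fun x : ℝ => |x - c| * (1 / (2 * σ) * rexp (-|x - μ| / σ))) := by
  have h1 : Integrable (fun x : ℝ =>
      (fun y : ℝ => |y - (c - μ) / σ| * rexp (-|y|)) ((x - μ) / σ)) := by
    have := ((K_integrable ((c - μ) / σ)).comp_div (R := σ) hσ.ne').comp_sub_right μ
    simpa using this
  have h2 := h1.const_mul (1 / 2)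
  refine h2.congr (Eventually.of_forall fun x => ?_)
  simp only
  rw [show (x - μ) / σ - (c - μ) / σ = (x - c) / σ by ring]
  simp only [abs_div, abs_of_pos hσ, neg_div]
  field_simp

lemma lap_abs_val (μ σ c : ℝ) (hσ : 0 < σ) :
    ∫ x : ℝ, |x - c| * (1 / (2 * σ) * rexp (-|x - μ| / σ))
      = |c - μ| + σ * rexp (-|c - μ| / σ) := by
  have key : (fun x : ℝ => |x - c| * (1 / (2 * σ) * rexp (-|x - μ| / σ)))
      = fun x : ℝ => 1 / 2 * (fun y : ℝ => |y / σ - (c - μ) / σ| * rexp (-|y / σ|)) (x - μ) := by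
    funext x
    simp only
    rw [show (x - μ) / σ - (c - μ) / σ = (x - c) / σ by ring]
    simp only [abs_div, abs_of_pos hσ, neg_div]
    field_simp
  rw [key, integral_const_mul, integral_sub_right_eq_self
    (fun y : ℝ => |y / σ - (c - μ) / σ| * rexp (-|y / σ|)) μ]
  have h2 : ∫ x : ℝ, (fun y : ℝ => |y - (c - μ) / σ| * rexp (-|y|)) (x / σ)
      = |σ| • ∫ y : ℝ, |y - (c - μ) / σ| * rexp (-|y|) :=
    Measure.integral_comp_div (fun y : ℝ => |y - (c - μ) / σ| * rexp (-|y|)) σ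
  simp only at h2
  rw [h2, K_val', abs_of_pos hσ, smul_eq_mul]
  simp only [abs_div, abs_of_pos hσ, neg_div]
  field_simp

lemma lapden_cont (μ σ : ℝ) : Continuous (fun x : ℝ => 1 / (2 * σ) * rexp (-|x - μ| / σ)) := by
  continuity

lemma lapden_pos (μ σ : ℝ) (hσ : 0 < σ) (x : ℝ) :
    0 < 1 / (2 * σ) * rexp (-|x - μ| / σ) := by positivity

lemma lap_prob (μ σ : ℝ) (hσ : 0 < σ) : IsProbabilityMeasure (laplace μ σ) := by
  constructor
  rw [laplace, withDensity_apply _ MeasurableSet.univ, Measure.restrict_univ]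
  rw [← ofReal_integral_eq_lintegral_ofReal (lap_norm_integrable μ σ hσ)
    (Eventually.of_forall fun x => (lapden_pos μ σ hσ x).le)]
  rw [lap_norm_val μ σ hσ]
  simp

lemma lap_klDiv_eq (μ μt σ σt : ℝ) (hσ : 0 < σ) (hσt : 0 < σt) :
    klDiv (laplace μ σ) (laplace μt σt)
      = Real.log (σt / σ) + (1 / σt) * (|μt - μ| + σ * rexp (-|μt - μ| / σ)) - 1 := by
  haveI := lap_prob μ σ hσ
  haveI := lap_prob μt σt hσt
  set h : ℝ → ℝ≥0∞ := fun x =>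
    ENNReal.ofReal (σt / σ * rexp (|x - μt| / σt - |x - μ| / σ)) with hh
  have hcont : Continuous fun x : ℝ => σt / σ * rexp (|x - μt| / σt - |x - μ| / σ) := by
    continuity
  have hmeas : Measurable h := by
    rw [hh]; exact ENNReal.measurable_ofReal.comp hcont.measurable
  have hwd : (laplace μt σt).withDensity h = laplace μ σ := by
    rw [laplace, laplace, ← withDensity_mul _ (by
      exact ENNReal.measurable_ofReal.comp (lapden_cont μt σt).measurable) hmeas]
    congr 1
    funext x
    simp only [Pi.mul_apply, hh]
    rw [← ENNReal.ofReal_mul (by positivity)]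
    congr 1
    rw [mul_mul_mul_comm, ← Real.exp_add,
      show -|x - μt| / σt + (|x - μt| / σt - |x - μ| / σ) = -|x - μ| / σ by ring]
    field_simp
  have hac : laplace μ σ ≪ laplace μt σt := by
    rw [← hwd]; exact withDensity_absolutelyContinuous _ _
  have hrn : (laplace μ σ).rnDeriv (laplace μt σt) =ᵐ[laplace μt σt] h := by
    rw [← hwd]; exact Measure.rnDeriv_withDensity _ hmeas
  have hrn' : (laplace μ σ).rnDeriv (laplace μt σt) =ᵐ[laplace μ σ] h := hac.ae_eq hrn
  have hllr : (fun x => llr (laplace μ σ) (laplace μt σt) x)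
      =ᵐ[laplace μ σ] fun x => Real.log (σt / σ) + (|x - μt| / σt - |x - μ| / σ) := by
    filter_upwards [hrn'] with x hx
    rw [llr, hx, hh]
    simp only
    rw [ENNReal.toReal_ofReal (by positivity), Real.log_mul (by positivity) (exp_ne_zero _),
      Real.log_exp]
  have hint : klDiv (laplace μ σ) (laplace μt σt)
      = ∫ x, (Real.log (σt / σ) + (|x - μt| / σt - |x - μ| / σ)) ∂(laplace μ σ) := by
    rw [klDiv]
    exact integral_congr_ae hllr
  -- now unfold withDensity integral
  set g0 : ℝ → ℝ := fun x => 1 / (2 * σ) * rexp (-|x - μ| / σ) with hg0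
  have hg0meas : Measurable fun x => (g0 x).toNNReal :=
    (measurable_real_toNNReal.comp (lapden_cont μ σ).measurable)
  have hwd2 : ∀ φ : ℝ → ℝ, ∫ x, φ x ∂(laplace μ σ) = ∫ x, g0 x * φ x := by
    intro φ
    rw [laplace]
    have : (fun x : ℝ => ENNReal.ofReal (1 / (2 * σ) * rexp (-|x - μ| / σ)))
        = fun x => ((g0 x).toNNReal : ℝ≥0∞) := by
      funext x; rfl
    rw [this, integral_withDensity_eq_integral_smul hg0meas]
    congr 1
    funext x
    rw [NNReal.smul_def, smul_eq_mul, Real.coe_toNNReal _ (lapden_pos μ σ hσ x).le]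
  rw [hint, hwd2]
  have hsplit : (fun x => g0 x * (Real.log (σt / σ) + (|x - μt| / σt - |x - μ| / σ)))
      = fun x => (Real.log (σt / σ) * g0 x + (1 / σt) * (|x - μt| * g0 x))
          - (1 / σ) * (|x - μ| * g0 x) := by
    funext x
    field_simp
    ring
  rw [hsplit]
  have i1 : Integrable (fun x => Real.log (σt / σ) * g0 x) :=
    (lap_norm_integrable μ σ hσ).const_mul _
  have i2 : Integrable (fun x => (1 / σt) * (|x - μt| * g0 x)) :=
    (lap_abs_integrable μ σ μt hσ).const_mul _
  have i3 : Integrable (fun x => (1 / σ) * (|x - μ| * g0 x)) :=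
    (lap_abs_integrable μ σ μ hσ).const_mul _
  have i12 : Integrable (fun x => Real.log (σt / σ) * g0 x + (1 / σt) * (|x - μt| * g0 x)) :=
    i1.add i2
  rw [integral_sub i12 i3, integral_add i1 i2]
  simp only [hg0]
  rw [integral_const_mul (Real.log (σt / σ)), integral_const_mul (1/σt), integral_const_mul (1/σ)]
  rw [lap_norm_val μ σ hσ, lap_abs_val μ σ μt hσ, lap_abs_val μ σ μ hσ]
  simp only [sub_self, abs_zero, neg_zero, zero_div, Real.exp_zero, mul_one, zero_add]
  field_simp

lemma exp_quad (t : ℝ) (ht : 0 ≤ t) : rexp (-t) - 1 + t ≤ t ^ 2 / 2 := by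
  have hder : ∀ s : ℝ, HasDerivAt (fun y : ℝ => y ^ 2 / 2 - y + 1 - rexp (-y))
      (s - 1 + rexp (-s)) s := by
    intro s
    have h1 : HasDerivAt (fun y : ℝ => y ^ 2 / 2) s s := by
      simpa using ((hasDerivAt_pow 2 s).div_const 2)
    have h2 : HasDerivAt (fun y : ℝ => rexp (-y)) (-rexp (-s)) s := by
      simpa using ((hasDerivAt_id s).neg).exp
    exact (((h1.fun_sub (hasDerivAt_id' s)).add_const 1).fun_sub h2).congr_deriv (by ring)
  have mono : MonotoneOn (fun y : ℝ => y ^ 2 / 2 - y + 1 - rexp (-y)) (Ici 0) := by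
    apply monotoneOn_of_deriv_nonneg (convex_Ici 0)
    · exact fun s _ => ((hder s).continuousAt).continuousWithinAt
    · exact fun s _ => ((hder s).differentiableAt).differentiableWithinAt
    · intro s _
      rw [(hder s).deriv]
      nlinarith [add_one_le_exp (-s)]
  have h0 := mono (self_mem_Ici) ht ht
  simp only [ne_eq, OfNat.ofNat_ne_zero, not_false_eq_true, zero_pow, zero_div, neg_zero,
    exp_zero] at h0
  linarith

lemma log_ineq (r : ℝ) (hr : 0 < r) :
    r - 1 - Real.log r ≤ 1 / 7 * (r - 1 / r) ^ 2 := by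
  set g : ℝ → ℝ := fun y => 1 / 7 * (y - y⁻¹) ^ 2 - y + 1 + Real.log y with hg
  have hder : ∀ x : ℝ, 0 < x → HasDerivAt g
      (1 / 7 * (2 * (x - x⁻¹) ^ 1 * (1 + (x ^ 2)⁻¹)) - 1 + x⁻¹) x := by
    intro x hx
    have h1 : HasDerivAt (fun y : ℝ => y - y⁻¹) (1 + (x ^ 2)⁻¹) x := by
      simpa [sub_neg_eq_add] using (hasDerivAt_id' x).fun_sub (hasDerivAt_inv hx.ne')
    have h2 := h1.fun_pow 2
    have h3 := h2.const_mul (1 / 7 : ℝ)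
    have h4 := ((h3.fun_sub (hasDerivAt_id' x)).add_const 1).fun_add (Real.hasDerivAt_log hx.ne')
    exact h4.congr_deriv (by norm_num)
  have hg1 : g 1 = 0 := by simp [hg]
  have key : 0 ≤ g r := by
    rcases le_or_gt 1 r with h1r | h1r
    · have mono : MonotoneOn g (Ici 1) := by
        apply monotoneOn_of_deriv_nonneg (convex_Ici 1)
        · exact fun s hs => ((hder s (by simp at hs; linarith)).continuousAt).continuousWithinAt
        · intro s hs
          rw [interior_Ici] at hs
          exact ((hder s (by linarith [mem_Ioi.mp hs])).differentiableAt).differentiableWithinAt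
        · intro s hs
          rw [interior_Ici] at hs
          have hs1 : 1 < s := hs
          have hs0 : 0 < s := by linarith
          rw [(hder s hs0).deriv]
          have hD : (1 / 7 * (2 * (s - s⁻¹) ^ 1 * (1 + (s ^ 2)⁻¹)) - 1 + s⁻¹) * (7 * s ^ 3)
              = (s - 1) * ((s - 2) ^ 2 + 2 * (s - 1) ^ 3) := by
            field_simp
            ring
          have hnum : 0 ≤ (s - 1) * ((s - 2) ^ 2 + 2 * (s - 1) ^ 3) :=
            mul_nonneg (by linarith)
              (add_nonneg (sq_nonneg _)
                (by nlinarith [pow_nonneg (show (0:ℝ) ≤ s - 1 by linarith) 3]))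
          nlinarith [pow_pos hs0 3]
      have := mono (by simp : (1:ℝ) ∈ Ici 1) (by simpa using h1r) h1r
      rw [hg1] at this
      exact this
    · have anti : AntitoneOn g (Ioc 0 1) := by
        apply antitoneOn_of_deriv_nonpos (convex_Ioc 0 1)
        · exact fun s hs => ((hder s hs.1).continuousAt).continuousWithinAt
        · intro s hs
          rw [interior_Ioc] at hs
          exact ((hder s hs.1).differentiableAt).differentiableWithinAt
        · intro s hs
          rw [interior_Ioc] at hs
          obtain ⟨hs0, hs1⟩ := hs
          rw [(hder s hs0).deriv]
          have hD : (1 / 7 * (2 * (s - s⁻¹) ^ 1 * (1 + (s ^ 2)⁻¹)) - 1 + s⁻¹) * (7 * s ^ 3)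
              = (s - 1) * (2 * s ^ 3 - 5 * s ^ 2 + 2 * s + 2) := by
            field_simp
            ring
          have hq : 0 < 2 * s ^ 3 - 5 * s ^ 2 + 2 * s + 2 := by
            nlinarith [mul_nonneg (by linarith : (0:ℝ) ≤ 1 - s)
              (by nlinarith [mul_nonneg hs0.le (by linarith : (0:ℝ) ≤ 1 - s)] :
                (0:ℝ) ≤ -2 * s ^ 2 + 3 * s + 1), pow_pos hs0 3]
          have hnum : (s - 1) * (2 * s ^ 3 - 5 * s ^ 2 + 2 * s + 2) ≤ 0 :=
            mul_nonpos_of_nonpos_of_nonneg (by linarith) hq.le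
          nlinarith [pow_pos hs0 3]
      have := anti (mem_Ioc.mpr ⟨hr, h1r.le⟩) (mem_Ioc.mpr ⟨one_pos, le_rfl⟩) h1r.le
      rw [hg1] at this
      exact this
  rw [hg] at key
  simp only at key
  have : r⁻¹ = 1 / r := by rw [one_div]
  rw [this] at key
  linarith

end LaplaceKL

/-- **KL divergence between Laplace distributions.**  For `σ, σ̃ > 0`,
`D_KL(Lap(μ,σ) ‖ Lap(μ̃,σ̃)) = (σ/σ̃)(e^{−|μ̃−μ|/σ} − (1 − |μ̃−μ|/σ)) + σ/σ̃ − 1 − ln(σ/σ̃)`,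
and this quantity is at most `(μ̃−μ)²/(2σσ̃) + (1/7)(σ̃²/σ²−1)²(σ²/σ̃²)`. -/
theorem laplace_klDiv (μ μt σ σt : ℝ) (hσ : 0 < σ) (hσt : 0 < σt) :
    klDiv (laplace μ σ) (laplace μt σt) =
      σ / σt * (Real.exp (-|μt - μ| / σ) - (1 - |μt - μ| / σ)) +
        σ / σt - 1 - Real.log (σ / σt) ∧
    σ / σt * (Real.exp (-|μt - μ| / σ) - (1 - |μt - μ| / σ)) +
        σ / σt - 1 - Real.log (σ / σt) ≤
      (μt - μ) ^ 2 / (2 * σ * σt) + 1 / 7 * (σt ^ 2 / σ ^ 2 - 1) ^ 2 * (σ ^ 2 / σt ^ 2) := by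
  constructor
  · rw [lap_klDiv_eq μ μt σ σt hσ hσt]
    have hlog : Real.log (σt / σ) = -Real.log (σ / σt) := by
      rw [← Real.log_inv]
      congr 1
      rw [inv_div]
    rw [hlog]
    field_simp
    ring
  · have hq : Real.exp (-|μt - μ| / σ) - 1 + |μt - μ| / σ ≤ (|μt - μ| / σ) ^ 2 / 2 := by
      have h := exp_quad (|μt - μ| / σ) (by positivity)
      rw [show -(|μt - μ| / σ) = -|μt - μ| / σ from (neg_div _ _).symm] at h
      exact h
    have h1 : σ / σt * (Real.exp (-|μt - μ| / σ) - (1 - |μt - μ| / σ))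
        ≤ σ / σt * ((|μt - μ| / σ) ^ 2 / 2) := by
      apply mul_le_mul_of_nonneg_left _ (by positivity)
      linarith
    have h2 := log_ineq (σ / σt) (by positivity)
    have e1 : σ / σt * ((|μt - μ| / σ) ^ 2 / 2) = (μt - μ) ^ 2 / (2 * σ * σt) := by
      rw [div_pow, sq_abs]
      field_simp
    have e2 : 1 / 7 * (σ / σt - 1 / (σ / σt)) ^ 2
        = 1 / 7 * (σt ^ 2 / σ ^ 2 - 1) ^ 2 * (σ ^ 2 / σt ^ 2) := by
      field_simp
      ring
    rw [e1] at h1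
    rw [e2] at h2
    linarith
end

section
/- Let s ∈ X^n with n ≥ 2 and ψ : X → [0,1]. Define μ = (1/n) Σ_{i∈[n]} ψ(s_i), μ_{-i} = (1/(n−1)) Σ_{j≠i} ψ(s_j), σ² = (1/n) Σ_{i∈[n]} (ψ(s_i) − μ)², and σ_{-i}² = (1/(n−1)) Σ_{j≠i} (ψ(s_j) − μ_{-i})². Then: (i) μ − μ_{-i} = (ψ(s_i) − μ)/(n−1) for every i; (ii) (1/n) Σ_{i∈[n]} (μ − μ_{-i})² = σ²/(n−1)²; and (iii) (1/n) Σ_{i∈[n]} (σ² − σ_{-i}²)² ≤ (σ²/(n−1)²)·(n²/(n−1)²). -/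
open scoped BigOperators

/-- Empirical mean `μ = (1/n) Σ_{i∈[n]} ψ(s_i)`. -/
noncomputable def empMean {X : Type*} {n : ℕ} (ψ : X → ℝ) (s : Fin n → X) : ℝ :=
  (∑ i : Fin n, ψ (s i)) / n

/-- Empirical variance `σ² = (1/n) Σ_{i∈[n]} (ψ(s_i) − μ)²`. -/
noncomputable def empVar {X : Type*} {n : ℕ} (ψ : X → ℝ) (s : Fin n → X) : ℝ :=
  (∑ i : Fin n, (ψ (s i) - empMean ψ s) ^ 2) / n

/-- Leave-one-out mean `μ_{-i} = (1/(n−1)) Σ_{j≠i} ψ(s_j)`. -/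
noncomputable def looMean {X : Type*} {n : ℕ} (ψ : X → ℝ) (s : Fin n → X) (i : Fin n) : ℝ :=
  (∑ j ∈ Finset.univ.erase i, ψ (s j)) / ((n : ℝ) - 1)

/-- Leave-one-out variance `σ_{-i}² = (1/(n−1)) Σ_{j≠i} (ψ(s_j) − μ_{-i})²`. -/
noncomputable def looVar {X : Type*} {n : ℕ} (ψ : X → ℝ) (s : Fin n → X) (i : Fin n) : ℝ :=
  (∑ j ∈ Finset.univ.erase i, (ψ (s j) - looMean ψ s i) ^ 2) / ((n : ℝ) - 1)

/-- **Leave-one-out sensitivity of empirical mean and variance.**  For a dataset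
`s ∈ X^n` with `n ≥ 2` and a query `ψ : X → [0,1]`:
(i) `μ − μ_{-i} = (ψ(s_i) − μ)/(n−1)` for every `i`;
(ii) `(1/n) Σ_i (μ − μ_{-i})² = σ²/(n−1)²`; and
(iii) `(1/n) Σ_i (σ² − σ_{-i}²)² ≤ (σ²/(n−1)²)·(n²/(n−1)²)`. -/
theorem loo_mean_variance_sensitivity {X : Type*} {n : ℕ} (hn : 2 ≤ n)
    (s : Fin n → X) (ψ : X → ℝ) (hψ : ∀ x, ψ x ∈ Set.Icc (0 : ℝ) 1) :
    (∀ i : Fin n,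
      empMean ψ s - looMean ψ s i = (ψ (s i) - empMean ψ s) / ((n : ℝ) - 1)) ∧
    (1 / (n : ℝ)) * (∑ i : Fin n, (empMean ψ s - looMean ψ s i) ^ 2) =
      empVar ψ s / ((n : ℝ) - 1) ^ 2 ∧
    (1 / (n : ℝ)) * (∑ i : Fin n, (empVar ψ s - looVar ψ s i) ^ 2) ≤
      empVar ψ s / ((n : ℝ) - 1) ^ 2 * ((n : ℝ) ^ 2 / ((n : ℝ) - 1) ^ 2) := by
  have hn2 : (2:ℝ) ≤ (n:ℝ) := by exact_mod_cast hn
  have hne : (n:ℝ) - 1 ≠ 0 := by linarith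
  have hnne : (n:ℝ) ≠ 0 := by linarith
  set V := empVar ψ s with hV
  set μ := empMean ψ s with hμ
  set d : Fin n → ℝ := fun i => ψ (s i) - μ with hd
  have hsum : ∑ j, ψ (s j) = (n:ℝ) * μ := by
    rw [hμ, empMean]; field_simp
  have hS1 : ∑ i, d i = 0 := by
    simp only [hd, Finset.sum_sub_distrib, hsum, Finset.sum_const, Finset.card_univ,
      Fintype.card_fin, nsmul_eq_mul]
    ring
  have hS2 : ∑ i, d i ^ 2 = (n:ℝ) * V := by
    rw [hV, empVar]; field_simp; rfl
  have hloo : ∀ i, looMean ψ s i = μ - d i / ((n:ℝ) - 1) := by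
    intro i
    rw [looMean, Finset.sum_erase_eq_sub (Finset.mem_univ i), hsum]
    field_simp [hd]
    ring
  have h1 : ∀ i : Fin n, μ - looMean ψ s i = d i / ((n:ℝ) - 1) := by
    intro i; rw [hloo i]; ring
  have part1 : ∀ i : Fin n,
      empMean ψ s - looMean ψ s i = (ψ (s i) - empMean ψ s) / ((n : ℝ) - 1) := by
    intro i; rw [h1 i]
  have part2 : (1 / (n : ℝ)) * (∑ i : Fin n, (empMean ψ s - looMean ψ s i) ^ 2) =
      empVar ψ s / ((n : ℝ) - 1) ^ 2 := by
    rw [← hμ, ← hV]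
    simp only [h1, div_pow]
    rw [← Finset.sum_div, hS2]
    field_simp
  refine ⟨part1, part2, ?_⟩
  -- key identity for the leave-one-out variance
  have hdelta : ∀ i : Fin n, V - looVar ψ s i =
      ((n:ℝ) * d i ^ 2 - ((n:ℝ) - 1) * V) / ((n:ℝ) - 1) ^ 2 := by
    intro i
    have key : ∀ j, ψ (s j) - looMean ψ s i = d j + d i / ((n:ℝ) - 1) := by
      intro j; rw [hloo i]; simp only [hd]; ring
    have e1 : ∑ j ∈ Finset.univ.erase i, (ψ (s j) - looMean ψ s i) ^ 2
        = (∑ j ∈ Finset.univ.erase i, d j ^ 2)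
          + 2 * (d i / ((n:ℝ) - 1)) * (∑ j ∈ Finset.univ.erase i, d j)
          + ((n:ℝ) - 1) * (d i / ((n:ℝ) - 1)) ^ 2 := by
      have hcard : ((Finset.univ.erase i).card : ℝ) = (n:ℝ) - 1 := by
        rw [Finset.card_erase_of_mem (Finset.mem_univ i), Finset.card_univ, Fintype.card_fin]
        have : 1 ≤ n := by omega
        push_cast [Nat.cast_sub this]
        ring
      calc ∑ j ∈ Finset.univ.erase i, (ψ (s j) - looMean ψ s i) ^ 2
          = ∑ j ∈ Finset.univ.erase i,
              (d j ^ 2 + 2 * (d i / ((n:ℝ) - 1)) * d j + (d i / ((n:ℝ) - 1)) ^ 2) :=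
            Finset.sum_congr rfl (fun j _ => by rw [key j]; ring)
        _ = _ := by
            rw [Finset.sum_add_distrib, Finset.sum_add_distrib, ← Finset.mul_sum,
              Finset.sum_const, nsmul_eq_mul, hcard]
    have e2 : ∑ j ∈ Finset.univ.erase i, d j ^ 2 = (n:ℝ) * V - d i ^ 2 := by
      rw [Finset.sum_erase_eq_sub (Finset.mem_univ i), hS2]
    have e3 : ∑ j ∈ Finset.univ.erase i, d j = - d i := by
      rw [Finset.sum_erase_eq_sub (Finset.mem_univ i), hS1]; ring
    rw [looVar, e1, e2, e3]
    field_simp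
    ring
  simp only [hdelta, div_pow]
  rw [← Finset.sum_div]
  -- bound the numerator
  have hμ0 : 0 ≤ μ := by
    rw [hμ, empMean]
    apply div_nonneg _ (by positivity)
    exact Finset.sum_nonneg fun i _ => (hψ (s i)).1
  have hμ1 : μ ≤ 1 := by
    rw [hμ, empMean, div_le_one (by linarith)]
    calc ∑ i : Fin n, ψ (s i) ≤ ∑ _i : Fin n, (1:ℝ) :=
          Finset.sum_le_sum fun i _ => (hψ (s i)).2
      _ = (n:ℝ) := by simp
  have hd4 : ∀ i, d i ^ 4 ≤ d i ^ 2 := by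
    intro i
    have h1' : -1 ≤ d i := by have := (hψ (s i)).1; simp only [hd]; linarith
    have h2' : d i ≤ 1 := by have := (hψ (s i)).2; simp only [hd]; linarith
    have hd2 : d i ^ 2 ≤ 1 := by nlinarith
    nlinarith [sq_nonneg (d i), sq_nonneg (d i ^ 2)]
  have hVpos : 0 ≤ V := by
    rw [hV, empVar]
    positivity
  have hsum4 : ∑ i, d i ^ 4 ≤ (n:ℝ) * V := by
    rw [← hS2]; exact Finset.sum_le_sum fun i _ => hd4 i
  have hexp : ∑ i : Fin n, ((n:ℝ) * d i ^ 2 - ((n:ℝ) - 1) * V) ^ 2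
      = (n:ℝ) ^ 2 * (∑ i, d i ^ 4) - 2 * (n:ℝ) * (((n:ℝ) - 1) * V) * (∑ i, d i ^ 2)
        + (n:ℝ) * (((n:ℝ) - 1) * V) ^ 2 := by
    rw [Finset.mul_sum, Finset.mul_sum]
    rw [show (n:ℝ) * (((n:ℝ) - 1) * V) ^ 2 = ∑ _i : Fin n, (((n:ℝ) - 1) * V) ^ 2 from by
      rw [Finset.sum_const, Finset.card_univ, Fintype.card_fin, nsmul_eq_mul]]
    rw [← Finset.sum_sub_distrib, ← Finset.sum_add_distrib]
    exact Finset.sum_congr rfl fun i _ => by ring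
  have hkey : ∑ i : Fin n, ((n:ℝ) * d i ^ 2 - ((n:ℝ) - 1) * V) ^ 2 ≤ (n:ℝ) ^ 3 * V := by
    rw [hexp, hS2]
    nlinarith [mul_nonneg hVpos hVpos, sq_nonneg ((n:ℝ) - 1)]
  have hpos4 : (0:ℝ) < (((n:ℝ) - 1) ^ 2) ^ 2 := by positivity
  calc (1 / (n:ℝ)) * ((∑ i : Fin n, ((n:ℝ) * d i ^ 2 - ((n:ℝ) - 1) * V) ^ 2)
          / (((n:ℝ) - 1) ^ 2) ^ 2)
      ≤ (1 / (n:ℝ)) * (((n:ℝ) ^ 3 * V) / (((n:ℝ) - 1) ^ 2) ^ 2) := by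
        apply mul_le_mul_of_nonneg_left _ (by positivity)
        exact div_le_div_of_nonneg_right hkey hpos4.le |>.trans_eq rfl
    _ = V / ((n:ℝ) - 1) ^ 2 * ((n:ℝ) ^ 2 / ((n:ℝ) - 1) ^ 2) := by
        field_simp
end
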